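/- Let P_N be the N×N nilpotent Jordan block. Fix ε > 0 and 0 < r < 1. Then for all sufficiently large N, the open disc D(0, r) is contained in the ε-pseudospectrum of P_N, i.e., for every z with |z| ≤ r and z ≠ 0, ‖(P_N - z)⁻¹‖ > 1/ε. -/

import Mathlib

/-- The `N×N` nilpotent Jordan block: ones on the superdiagonal, zeros elsewhere. -/
def jordanBlock (N : ℕ) : Matrix (Fin N) (Fin N) ℂ :=
  Matrix.of fun i j => if (j : ℕ) = (i : ℕ) + 1 then 1 else 0

/-!
For `P = jordanBlock (N + 1)` and `z ≠ 0`, the matrix `P - z` is invertible, being upper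
triangular with determinant `(-z) ^ (N + 1)`. The geometric vector `e = (1, z, …, z ^ N)` is a
quasimode: the shift `P` cancels `z • e` in every coordinate but the last, so
`‖(P - z) e‖ = ‖z‖ ^ (N + 1)`, while `‖e‖ ≥ |e₀| = 1`. Hence
`‖(P - z)⁻¹‖ ≥ ‖z‖ ^ (-(N + 1)) ≥ r ^ (-(N + 1))`, which exceeds `1 / ε` as soon as
`r ^ (N + 1) < ε`.
-/

open Matrix

theorem Matrix.norm_le_norm_toEuclideanCLM_inv_mul {𝕜 n : Type*} [RCLike 𝕜] [Fintype n]
    [DecidableEq n] {M : Matrix n n 𝕜} (hM : IsUnit M.det) (v : EuclideanSpace 𝕜 n) :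
    ‖v‖ ≤ ‖toEuclideanCLM (𝕜 := 𝕜) M⁻¹‖ * ‖toEuclideanCLM (𝕜 := 𝕜) M v‖ := by
  have h : toEuclideanCLM (𝕜 := 𝕜) M⁻¹ * toEuclideanCLM (𝕜 := 𝕜) M = 1 := by
    rw [← map_mul, nonsing_inv_mul _ hM, map_one]
  calc ‖v‖ = ‖toEuclideanCLM (𝕜 := 𝕜) M⁻¹ (toEuclideanCLM (𝕜 := 𝕜) M v)‖ :=
        congrArg norm (DFunLike.congr_fun h v).symm
    _ ≤ _ := ContinuousLinearMap.le_opNorm _ _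

theorem jordanBlock_isUpperTriangular (N : ℕ) : (jordanBlock N).IsUpperTriangular :=
  fun i j hji => if_neg (by simp only [id_eq] at hji; omega)

theorem det_jordanBlock_sub_smul_one (N : ℕ) (z : ℂ) :
    (jordanBlock N - z • 1).det = (-z) ^ N := by
  rw [← Algebra.algebraMap_eq_smul_one,
    det_of_isUpperTriangular ((jordanBlock_isUpperTriangular N).sub (blockTriangular_algebraMap z))]
  simp [jordanBlock, algebraMap_matrix_apply]

theorem jordanBlock_mulVec_apply {N : ℕ} (v : Fin N → ℂ) (i : Fin N) :
    (jordanBlock N *ᵥ v) i = if h : (i : ℕ) + 1 < N then v ⟨i + 1, h⟩ else 0 := by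
  simp only [mulVec, dotProduct, jordanBlock, of_apply, ite_mul, one_mul, zero_mul]
  split_ifs with h
  · simp_rw [show ∀ j : Fin N, (j : ℕ) = i + 1 ↔ j = ⟨i + 1, h⟩ from
      fun j => (Fin.ext_iff (a := j) (b := ⟨i + 1, h⟩)).symm, Finset.sum_ite_eq', Finset.mem_univ,
      if_true]
  · exact Finset.sum_eq_zero fun j _ => if_neg (by omega)

theorem jordanBlock_sub_smul_one_mulVec_geometric (z : ℂ) (N : ℕ) :
    (jordanBlock (N + 1) - z • 1) *ᵥ (fun i : Fin (N + 1) => z ^ (i : ℕ)) =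
      Pi.single (Fin.last N) (-z ^ (N + 1)) := by
  funext i
  rw [sub_mulVec, smul_mulVec, one_mulVec, Pi.sub_apply, jordanBlock_mulVec_apply, Pi.smul_apply,
    smul_eq_mul, ← pow_succ']
  by_cases hi : i = Fin.last N
  · subst hi
    simp
  · have : (i : ℕ) + 1 < N + 1 := Nat.succ_lt_succ (Fin.val_lt_last hi)
    simp [this, hi]

def geometricVector (z : ℂ) (N : ℕ) : EuclideanSpace ℂ (Fin N) :=
  WithLp.toLp 2 fun i => z ^ (i : ℕ)

theorem norm_toEuclideanCLM_jordanBlock_sub_smul_one_geometricVector (z : ℂ) (N : ℕ) :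
    ‖toEuclideanCLM (𝕜 := ℂ) (jordanBlock (N + 1) - z • 1) (geometricVector z (N + 1))‖ =
      ‖z‖ ^ (N + 1) := by
  rw [geometricVector, toEuclideanCLM_toLp, jordanBlock_sub_smul_one_mulVec_geometric,
    PiLp.toLp_single, PiLp.norm_single, norm_neg, norm_pow]

theorem one_le_norm_geometricVector (z : ℂ) (N : ℕ) : 1 ≤ ‖geometricVector z (N + 1)‖ := by
  simpa [geometricVector] using PiLp.norm_apply_le (geometricVector z (N + 1)) 0

theorem inv_norm_pow_le_norm_toEuclideanCLM_inv_jordanBlock_sub_smul_one {z : ℂ} (hz : z ≠ 0)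
    (N : ℕ) :
    (‖z‖ ^ (N + 1))⁻¹ ≤
      ‖toEuclideanCLM (n := Fin (N + 1)) (𝕜 := ℂ) (jordanBlock (N + 1) - z • 1)⁻¹‖ := by
  have hdet : IsUnit (jordanBlock (N + 1) - z • 1).det := by
    rw [det_jordanBlock_sub_smul_one]
    exact (pow_ne_zero _ (neg_ne_zero.2 hz)).isUnit
  rw [inv_le_iff_one_le_mul₀ (by positivity)]
  calc 1 ≤ ‖geometricVector z (N + 1)‖ := one_le_norm_geometricVector z N
    _ ≤ ‖toEuclideanCLM (n := Fin (N + 1)) (𝕜 := ℂ) (jordanBlock (N + 1) - z • 1)⁻¹‖ *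
          ‖toEuclideanCLM (𝕜 := ℂ) (jordanBlock (N + 1) - z • 1) (geometricVector z (N + 1))‖ :=
      norm_le_norm_toEuclideanCLM_inv_mul hdet _
    _ = _ := by rw [norm_toEuclideanCLM_jordanBlock_sub_smul_one_geometricVector]

theorem disc_subset_pseudospectrum_jordanBlock_general (ε r : ℝ) (hε : 0 < ε) (hr1 : r < 1) :
    ∃ N₀ : ℕ, ∀ N ≥ N₀, ∀ z : ℂ, ‖z‖ ≤ r → z ≠ 0 →
      ‖Matrix.toEuclideanCLM (𝕜 := ℂ)
          ((jordanBlock N - z • (1 : Matrix (Fin N) (Fin N) ℂ))⁻¹)‖ > 1 / ε := by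
  obtain ⟨n, hn⟩ := exists_pow_lt_of_lt_one hε hr1
  refine ⟨n + 1, fun N hN z hzr hz => ?_⟩
  obtain ⟨N, rfl⟩ := Nat.exists_eq_add_one.2 (by omega : 0 < N)
  have hz_pow_lt : ‖z‖ ^ (N + 1) < ε :=
    calc ‖z‖ ^ (N + 1) ≤ ‖z‖ ^ n :=
          pow_le_pow_of_le_one (norm_nonneg z) (hzr.trans hr1.le) (by omega)
      _ ≤ r ^ n := pow_le_pow_left₀ (norm_nonneg z) hzr n
      _ < ε := hn
  calc 1 / ε = ε⁻¹ := one_div ε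
    _ < (‖z‖ ^ (N + 1))⁻¹ := inv_strictAnti₀ (by positivity) hz_pow_lt
    _ ≤ _ := inv_norm_pow_le_norm_toEuclideanCLM_inv_jordanBlock_sub_smul_one hz N

/-- For fixed `ε > 0` and `0 < r < 1`, for all sufficiently large `N` the disc
`D(0,r)` lies in the `ε`-pseudospectrum of `P_N`: for every `z ≠ 0` with `|z| ≤ r`,
the resolvent norm `‖(P_N - z)⁻¹‖` exceeds `1/ε`. -/
theorem disc_subset_pseudospectrum_jordanBlock (ε r : ℝ) (hε : 0 < ε)
    (hr0 : 0 < r) (hr1 : r < 1) :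
    ∃ N₀ : ℕ, ∀ N ≥ N₀, ∀ z : ℂ, ‖z‖ ≤ r → z ≠ 0 →
      ‖Matrix.toEuclideanCLM (𝕜 := ℂ)
          ((jordanBlock N - z • (1 : Matrix (Fin N) (Fin N) ℂ))⁻¹)‖ > 1 / ε :=
  disc_subset_pseudospectrum_jordanBlock_general ε r hε hr1
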